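/- Let (r,s) be an edge of a connected weighted graph such that the graph with edge (r,s) removed is still connected, and let dist_1^w(r,s) be the weighted shortest-path distance from r to s in the graph with edge (r,s) removed, using edge weights 1/b_e. Then the locality factor satisfies η(r,s) ≤ (1 + 1/(b_rs · dist_1^w(r,s)))^{-1}. -/

import Mathlib

open Matrix BigOperators

/-- The weighted Laplacian of a weight function `w` on `Fin N`. -/
def lapMat {N : ℕ} (w : Fin N → Fin N → ℝ) : Matrix (Fin N) (Fin N) ℝ :=
  fun i j => if i = j then ∑ k, w i k else - w i j

/-- Symmetric, nonnegative weights with zero diagonal. -/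
def IsWeight {N : ℕ} (w : Fin N → Fin N → ℝ) : Prop :=
  (∀ i j, w i j = w j i) ∧ (∀ i j, 0 ≤ w i j) ∧ (∀ i, w i i = 0)

/-- The simple graph whose edges are the pairs with nonzero weight. -/
def wGraph {N : ℕ} (w : Fin N → Fin N → ℝ) : SimpleGraph (Fin N) where
  Adj i j := i ≠ j ∧ (w i j ≠ 0 ∨ w j i ≠ 0)
  symm := ⟨fun i j ⟨h1, h2⟩ => ⟨h1.symm, h2.symm⟩⟩
  loopless := ⟨fun i h => h.1 rfl⟩

/-- The dipole vector `ν_rs`: `+1` at `r`, `-1` at `s`, `0` elsewhere. -/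
def dipole {N : ℕ} (r s : Fin N) : Fin N → ℝ :=
  fun i => (if i = r then (1:ℝ) else 0) - (if i = s then (1:ℝ) else 0)

/-- `Bd` is the Moore-Penrose pseudoinverse of `B` (the four Penrose axioms). -/
def IsMoorePenrose {N : ℕ} (B Bd : Matrix (Fin N) (Fin N) ℝ) : Prop :=
  B * Bd * B = B ∧ Bd * B * Bd = Bd ∧ (B * Bd)ᵀ = B * Bd ∧ (Bd * B)ᵀ = Bd * B

/-- The locality factor `η(r,s) = b_rs ν_rs^T B^† ν_rs`. -/
def eta {N : ℕ} (w : Fin N → Fin N → ℝ) (Bdag : Matrix (Fin N) (Fin N) ℝ)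
    (r s : Fin N) : ℝ :=
  w r s * (dipole r s ⬝ᵥ Bdag.mulVec (dipole r s))

/-- The weights after removal of the edge `(r,s)`. -/
def removeEdge {N : ℕ} (w : Fin N → Fin N → ℝ) (r s : Fin N) :
    Fin N → Fin N → ℝ :=
  fun i j => if (i = r ∧ j = s) ∨ (i = s ∧ j = r) then 0 else w i j

/-- The length of a walk where each edge `(i,j)` has length `1 / w i j`. -/
noncomputable def walkInvLength {N : ℕ} (w : Fin N → Fin N → ℝ) {G : SimpleGraph (Fin N)}
    {a b : Fin N} (p : G.Walk a b) : ℝ :=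
  (p.darts.map (fun d => 1 / w d.fst d.snd)).sum

/-- Weighted shortest-path distance from `r` to `s` with edge lengths `1 / w`. -/
noncomputable def wDist {N : ℕ} (w : Fin N → Fin N → ℝ) (r s : Fin N) : ℝ :=
  sInf {L : ℝ | ∃ p : (wGraph w).Walk r s, p.IsPath ∧ L = walkInvLength w p}

/-!
With `x = B† ν`, the quantity `Δ = νᵀ x = x r - x s` is also the Dirichlet energy `xᵀ B x`
(Penrose axioms plus symmetry of `B†`). Close a path `p` from `r` to `s` avoiding the edge `(r,s)`
into a cycle with that edge: the energy along a cycle is at most the total energy, and by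
Cauchy–Schwarz the energy along `p` is at least `Δ² / L(p)`, where `L(p)` is the `1/b`-length of
`p`. Hence `b Δ² + Δ² / L(p) ≤ Δ`, which rearranges to `b Δ ≤ (1 + 1/(b L(p)))⁻¹`; take `p`
shortest.
-/

namespace IsMoorePenrose

variable {N : ℕ} {A X Y : Matrix (Fin N) (Fin N) ℝ}

theorem unique (hX : IsMoorePenrose A X) (hY : IsMoorePenrose A Y) : X = Y := by
  obtain ⟨hX1, hX2, hX3, hX4⟩ := hX
  obtain ⟨hY1, hY2, hY3, hY4⟩ := hY
  have hAX : A * X = A * Y :=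
    calc A * X = (A * X)ᵀ := hX3.symm
      _ = (A * Y * A * X)ᵀ := by rw [hY1]
      _ = (A * X)ᵀ * (A * Y)ᵀ := by rw [← transpose_mul]; simp only [Matrix.mul_assoc]
      _ = A * X * A * Y := by rw [hX3, hY3]; simp only [Matrix.mul_assoc]
      _ = A * Y := by rw [hX1]
  have hXA : X * A = Y * A :=
    calc X * A = (X * A)ᵀ := hX4.symm
      _ = (X * (A * Y * A))ᵀ := by rw [hY1]
      _ = (Y * A)ᵀ * (X * A)ᵀ := by rw [← transpose_mul]; simp only [Matrix.mul_assoc]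
      _ = Y * (A * X * A) := by rw [hX4, hY4]; simp only [Matrix.mul_assoc]
      _ = Y * A := by rw [hX1]
  calc X = X * A * X := hX2.symm
    _ = Y * A * Y := by rw [hXA, Matrix.mul_assoc, hAX, ← Matrix.mul_assoc]
    _ = Y := hY2

theorem transpose (hX : IsMoorePenrose A X) : IsMoorePenrose Aᵀ Xᵀ := by
  obtain ⟨h1, h2, h3, h4⟩ := hX
  refine ⟨?_, ?_, ?_, ?_⟩
  · simpa only [transpose_mul, Matrix.mul_assoc] using congrArg Matrix.transpose h1
  · simpa only [transpose_mul, Matrix.mul_assoc] using congrArg Matrix.transpose h2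
  · rw [transpose_mul, transpose_transpose, transpose_transpose, ← transpose_mul, h4]
  · rw [transpose_mul, transpose_transpose, transpose_transpose, ← transpose_mul, h3]

theorem transpose_eq (hA : Aᵀ = A) (hX : IsMoorePenrose A X) : Xᵀ = X :=
  (hX.unique (hA ▸ hX.transpose)).symm

theorem dotProduct_mulVec_mulVec (hA : Aᵀ = A) (hX : IsMoorePenrose A X) (v : Fin N → ℝ) :
    X *ᵥ v ⬝ᵥ A *ᵥ (X *ᵥ v) = v ⬝ᵥ X *ᵥ v :=
  calc X *ᵥ v ⬝ᵥ A *ᵥ (X *ᵥ v) = v ᵥ* Xᵀ ⬝ᵥ (A * X) *ᵥ v := by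
        rw [vecMul_transpose, mulVec_mulVec]
    _ = v ⬝ᵥ (Xᵀ * A * X) *ᵥ v := by rw [← dotProduct_mulVec, mulVec_mulVec, Matrix.mul_assoc]
    _ = v ⬝ᵥ X *ᵥ v := by rw [hX.transpose_eq hA, hX.2.1]

end IsMoorePenrose

namespace IsWeight

variable {N : ℕ} {w : Fin N → Fin N → ℝ}

theorem lapMat_apply (hw : IsWeight w) (i j : Fin N) :
    lapMat w i j = (if i = j then ∑ k, w i k else 0) - w i j := by
  by_cases h : i = j
  · subst h; simp [lapMat, hw.2.2]
  · simp [lapMat, h]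

theorem lapMat_transpose (hw : IsWeight w) : (lapMat w)ᵀ = lapMat w := by
  ext i j
  simp only [transpose_apply, hw.lapMat_apply, hw.1 j i, eq_comm (a := j)]
  split_ifs with h <;> simp [h]

theorem two_mul_dotProduct_lapMat_mulVec (hw : IsWeight w) (x : Fin N → ℝ) :
    2 * (x ⬝ᵥ lapMat w *ᵥ x) = ∑ i, ∑ j, w i j * (x i - x j) ^ 2 := by
  have hrow : ∀ i, x i * (lapMat w *ᵥ x) i = ∑ j, (w i j * x i ^ 2 - w i j * x i * x j) := by
    intro i
    simp only [mulVec, dotProduct, hw.lapMat_apply, sub_mul, ite_mul, zero_mul,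
      Finset.sum_sub_distrib, Finset.sum_ite_eq, Finset.mem_univ, if_true, mul_sub,
      Finset.mul_sum, Finset.sum_mul]
    congr 1 <;> refine Finset.sum_congr rfl fun j _ => by ring
  have hswap : ∑ i, ∑ j, w i j * x j ^ 2 = ∑ i, ∑ j, w i j * x i ^ 2 := by
    rw [Finset.sum_comm]; simp only [hw.1]
  calc 2 * (x ⬝ᵥ lapMat w *ᵥ x)
      = ∑ i, ∑ j, 2 * (w i j * x i ^ 2 - w i j * x i * x j) := by
        simp only [dotProduct, hrow, Finset.mul_sum]
    _ = ∑ i, ∑ j, 2 * (w i j * x i ^ 2 - w i j * x i * x j)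
        + (∑ i, ∑ j, w i j * x j ^ 2 - ∑ i, ∑ j, w i j * x i ^ 2) := by
        rw [hswap, sub_self, add_zero]
    _ = ∑ i, ∑ j, w i j * (x i - x j) ^ 2 := by
        simp only [← Finset.sum_sub_distrib, ← Finset.sum_add_distrib]
        exact Finset.sum_congr rfl fun i _ => Finset.sum_congr rfl fun j _ => by ring

theorem pos_of_adj (hw : IsWeight w) {i j : Fin N} (h : (wGraph w).Adj i j) : 0 < w i j := by
  obtain ⟨-, hij | hji⟩ := h
  · exact (hw.2.1 i j).lt_of_ne' hij
  · exact (hw.2.1 i j).lt_of_ne' (hw.1 i j ▸ hji)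

theorem removeEdge_le (hw : IsWeight w) (r s i j : Fin N) : removeEdge w r s i j ≤ w i j := by
  unfold _root_.removeEdge
  split_ifs
  exacts [hw.2.1 i j, le_rfl]

theorem sum_le_dotProduct_lapMat_mulVec (hw : IsWeight w) (x : Fin N → ℝ)
    {T : Finset (Fin N × Fin N)} (hT : ∀ q ∈ T, q.swap ∉ T) :
    ∑ q ∈ T, w q.1 q.2 * (x q.1 - x q.2) ^ 2 ≤ x ⬝ᵥ lapMat w *ᵥ x := by
  set f : Fin N × Fin N → ℝ := fun q => w q.1 q.2 * (x q.1 - x q.2) ^ 2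
  have hf : ∀ q, f q.swap = f q := fun q => by
    simp only [f, Prod.fst_swap, Prod.snd_swap, hw.1 q.2]; ring
  have hdisj : Disjoint T (T.image Prod.swap) := by
    refine Finset.disjoint_right.mpr fun q hq hqT => ?_
    obtain ⟨q', hq', rfl⟩ := Finset.mem_image.mp hq
    exact hT q' hq' hqT
  have hswap : ∑ q ∈ T.image Prod.swap, f q = ∑ q ∈ T, f q := by
    rw [Finset.sum_image fun a _ b _ h => Prod.swap_injective h]
    simp only [hf]
  have : 2 * ∑ q ∈ T, f q ≤ 2 * (x ⬝ᵥ lapMat w *ᵥ x) :=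
    calc 2 * ∑ q ∈ T, f q = ∑ q ∈ T ∪ T.image Prod.swap, f q := by
          rw [Finset.sum_union hdisj, hswap]; ring
      _ ≤ ∑ q, f q :=
          Finset.sum_le_univ_sum_of_nonneg fun q => mul_nonneg (hw.2.1 _ _) (sq_nonneg _)
      _ = 2 * (x ⬝ᵥ lapMat w *ᵥ x) := by
          rw [hw.two_mul_dotProduct_lapMat_mulVec, Fintype.sum_prod_type]
  linarith

theorem sum_darts_le_dotProduct_lapMat_mulVec (hw : IsWeight w) (x : Fin N → ℝ)
    {G : SimpleGraph (Fin N)} {u v : Fin N} {t : G.Walk u v} (ht : t.IsTrail) :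
    (t.darts.map fun d => w d.fst d.snd * (x d.fst - x d.snd) ^ 2).sum
      ≤ x ⬝ᵥ lapMat w *ᵥ x := by
  classical
  set l := t.darts.map SimpleGraph.Dart.toProd
  have hl : (l.map Sym2.mk.uncurry).Nodup := by
    rw [List.map_map]
    exact ht.edges_nodup
  calc _ = ∑ q ∈ l.toFinset, w q.1 q.2 * (x q.1 - x q.2) ^ 2 := by
        rw [List.sum_toFinset _ hl.of_map, List.map_map]; rfl
    _ ≤ _ := hw.sum_le_dotProduct_lapMat_mulVec x fun q hq hqswap => ?_
  rw [List.mem_toFinset] at hq hqswap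
  have hq_eq : q.swap = q := List.inj_on_of_nodup_map hl hqswap hq Sym2.eq_swap
  obtain ⟨d, -, rfl⟩ := List.mem_map.mp hq
  exact d.adj.ne (congrArg Prod.snd hq_eq)

end IsWeight

theorem dipole_dotProduct {N : ℕ} (r s : Fin N) (x : Fin N → ℝ) :
    dipole r s ⬝ᵥ x = x r - x s := by
  simp [dotProduct, dipole, sub_mul, Finset.sum_sub_distrib]

theorem SimpleGraph.Walk.sum_darts_sub {V M : Type*} [AddCommGroup M] {G : SimpleGraph V}
    (x : V → M) {a b : V} (p : G.Walk a b) :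
    (p.darts.map fun d => x d.fst - x d.snd).sum = x a - x b := by
  induction p with
  | nil => simp
  | cons h q ih => simp [ih]

theorem sq_sub_div_walkInvLength_le {N : ℕ} {w : Fin N → Fin N → ℝ} {G : SimpleGraph (Fin N)}
    {a b : Fin N} {p : G.Walk a b} (hp : p.darts.Nodup) (hw : ∀ d ∈ p.darts, 0 < w d.fst d.snd)
    (x : Fin N → ℝ) :
    (x a - x b) ^ 2 / walkInvLength w p
      ≤ (p.darts.map fun d => w d.fst d.snd * (x d.fst - x d.snd) ^ 2).sum := by
  classical
  rw [walkInvLength, ← p.sum_darts_sub x, ← List.sum_toFinset _ hp, ← List.sum_toFinset _ hp,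
    ← List.sum_toFinset _ hp]
  refine (Finset.sq_sum_div_le_sum_sq_div _ _ fun d hd => ?_).trans_eq ?_
  · exact one_div_pos.mpr (hw d (List.mem_toFinset.mp hd))
  · refine Finset.sum_congr rfl fun d _ => ?_
    rw [one_div, div_inv_eq_mul, mul_comm]

theorem walkInvLength_nonneg {N : ℕ} {w : Fin N → Fin N → ℝ} (hw : ∀ i j, 0 ≤ w i j)
    {G : SimpleGraph (Fin N)} {a b : Fin N} (p : G.Walk a b) : 0 ≤ walkInvLength w p :=
  List.sum_nonneg fun _ h => by
    obtain ⟨d, -, rfl⟩ := List.mem_map.mp h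
    exact one_div_nonneg.mpr (hw _ _)

theorem isWeight_removeEdge {N : ℕ} {w : Fin N → Fin N → ℝ} (hw : IsWeight w) (r s : Fin N) :
    IsWeight (removeEdge w r s) := by
  obtain ⟨hsym, hnn, hdiag⟩ := hw
  refine ⟨fun i j => ?_, fun i j => ?_, fun i => ?_⟩ <;> simp only [removeEdge]
  · by_cases h : i = r ∧ j = s ∨ i = s ∧ j = r
    · rw [if_pos h, if_pos (by tauto)]
    · rw [if_neg h, if_neg (by tauto), hsym]
  · split_ifs <;> simp [hnn]
  · split_ifs <;> simp [hdiag]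

theorem wGraph_removeEdge_le {N : ℕ} (w : Fin N → Fin N → ℝ) (r s : Fin N) :
    wGraph (removeEdge w r s) ≤ wGraph w := by
  rintro i j ⟨hne, h⟩
  refine ⟨hne, ?_⟩
  unfold removeEdge at h
  split_ifs at h <;> tauto

theorem not_adj_wGraph_removeEdge {N : ℕ} (w : Fin N → Fin N → ℝ) (r s : Fin N) :
    ¬ (wGraph (removeEdge w r s)).Adj r s := by
  rintro ⟨-, h⟩
  simp [removeEdge] at h

theorem IsWeight.edge_add_path_energy_le {N : ℕ} {w : Fin N → Fin N → ℝ} (hw : IsWeight w)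
    {r s : Fin N} (hrs : 0 < w r s) {p : (wGraph (removeEdge w r s)).Walk r s} (hp : p.IsPath)
    (x : Fin N → ℝ) :
    w r s * (x r - x s) ^ 2
        + (p.darts.map fun d => removeEdge w r s d.fst d.snd * (x d.fst - x d.snd) ^ 2).sum
      ≤ x ⬝ᵥ lapMat w *ᵥ x := by
  have hsr : (wGraph w).Adj s r :=
    ⟨fun h => hrs.ne' (h ▸ hw.2.2 r), Or.inr hrs.ne'⟩
  have hle := wGraph_removeEdge_le w r s
  have hcycle : (SimpleGraph.Walk.cons hsr (p.mapLe hle)).IsTrail := by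
    refine (hp.isTrail.mapLe hle).cons hsr fun hmem => not_adj_wGraph_removeEdge w r s ?_
    rw [SimpleGraph.Walk.edges_mapLe_eq_edges] at hmem
    exact (p.adj_of_mem_edges hmem).symm
  refine le_trans ?_ (hw.sum_darts_le_dotProduct_lapMat_mulVec x hcycle)
  simp only [SimpleGraph.Walk.darts_cons, SimpleGraph.Walk.darts_map, List.map_cons,
    List.map_map, List.sum_cons]
  rw [hw.1 s r, ← neg_sub, neg_sq]
  refine add_le_add le_rfl (List.sum_le_sum fun d _ => ?_)
  exact mul_le_mul_of_nonneg_right (hw.removeEdge_le r s _ _) (sq_nonneg _)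

theorem exists_isPath_walkInvLength_eq_wDist {N : ℕ} (w : Fin N → Fin N → ℝ) {a b : Fin N}
    (h : (wGraph w).Reachable a b) :
    ∃ p : (wGraph w).Walk a b, p.IsPath ∧ walkInvLength w p = wDist w a b := by
  classical
  set S := {L : ℝ | ∃ p : (wGraph w).Walk a b, p.IsPath ∧ L = walkInvLength w p}
  have hfin : S.Finite :=
    (Set.finite_range fun q : (wGraph w).Path a b => walkInvLength w q.1).subset
      (by rintro _ ⟨p, hp, rfl⟩; exact ⟨⟨p, hp⟩, rfl⟩)
  have hne : S.Nonempty := ⟨_, h.some.toPath.1, h.some.toPath.2, rfl⟩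
  obtain ⟨p, hp, hL⟩ := hne.csInf_mem hfin
  exact ⟨p, hp, hL.symm⟩

theorem mul_le_inv_one_add_one_div {b L Δ : ℝ} (hb : 0 < b) (hL : 0 ≤ L)
    (h : b * Δ ^ 2 + Δ ^ 2 / L ≤ Δ) : b * Δ ≤ (1 + 1 / (b * L))⁻¹ := by
  rcases le_or_gt Δ 0 with hΔ | hΔ
  · exact (mul_nonpos_of_nonneg_of_nonpos hb.le hΔ).trans (inv_nonneg.mpr (by positivity))
  have h1 : b * Δ + Δ / L ≤ 1 := by
    refine le_of_mul_le_mul_right ?_ hΔ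
    calc (b * Δ + Δ / L) * Δ = b * Δ ^ 2 + Δ ^ 2 / L := by ring
      _ ≤ 1 * Δ := by rwa [one_mul]
  rcases hL.eq_or_lt with rfl | hL
  · -- `L = 0`: then `Δ / L = 0` and `1 / (b * L) = 0`, so the claim is `b * Δ ≤ 1`
    simpa using h1
  have hbL := mul_pos hb hL
  rw [one_add_div hbL.ne', inv_div, le_div_iff₀ (by positivity)]
  calc b * Δ * (b * L + 1) = b * L * (b * Δ + Δ / L) := by field_simp
    _ ≤ b * L * 1 := mul_le_mul_of_nonneg_left h1 hbL.le
    _ = b * L := mul_one _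

theorem locality_factor_upper_bound_general {N : ℕ} (w : Fin N → Fin N → ℝ)
    (hw : IsWeight w)
    (r s : Fin N) (hedge : 0 < w r s)
    (hconn' : (wGraph (removeEdge w r s)).Connected)
    (Bdag : Matrix (Fin N) (Fin N) ℝ)
    (hB : IsMoorePenrose (lapMat w) Bdag) :
    eta w Bdag r s ≤ (1 + 1 / (w r s * wDist (removeEdge w r s) r s))⁻¹ := by
  obtain ⟨p, hp, hpL⟩ := exists_isPath_walkInvLength_eq_wDist _ (hconn'.preconnected r s)
  set x := Bdag *ᵥ dipole r s
  have hEnergy : x ⬝ᵥ lapMat w *ᵥ x = x r - x s := by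
    rw [hB.dotProduct_mulVec_mulVec hw.lapMat_transpose, dipole_dotProduct]
  have hCycle := hw.edge_add_path_energy_le hedge hp x
  have hCS := sq_sub_div_walkInvLength_le
    (SimpleGraph.Walk.darts_nodup_of_support_nodup hp.support_nodup)
    (fun d _ => (isWeight_removeEdge hw r s).pos_of_adj d.adj) x
  rw [eta, dipole_dotProduct, ← hpL]
  exact mul_le_inv_one_add_one_div hedge
    (walkInvLength_nonneg (isWeight_removeEdge hw r s).2.1 p) (by linarith)

theorem locality_factor_upper_bound {N : ℕ} (w : Fin N → Fin N → ℝ)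
    (hw : IsWeight w) (hconn : (wGraph w).Connected)
    (r s : Fin N) (hedge : 0 < w r s)
    (hconn' : (wGraph (removeEdge w r s)).Connected)
    (Bdag : Matrix (Fin N) (Fin N) ℝ)
    (hB : IsMoorePenrose (lapMat w) Bdag) :
    eta w Bdag r s ≤ (1 + 1 / (w r s * wDist (removeEdge w r s) r s))⁻¹ :=
  locality_factor_upper_bound_general w hw r s hedge hconn' Bdag hB
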